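/- arXiv:1004.0203 — 4 statements merged into one kernel-verified Lean document; each statement's English description precedes it below -/
import Mathlib

section
/- Let Y be a Banach space, (ε_n) a null sequence in [0,1), and (y_n*) a sequence in Y* such that ‖∑ α_n y_n*‖ ≤ sup_n (1+ε_n)|α_n| for all (α_n) ∈ c₀ and ‖y_n*‖ → 1. Let (N_n) be a sequence of pairwise disjoint infinite subsets of ℕ and define x_n* = ∑_{k ∈ N_n} y_k*/(1+ε_k) (the series converging in the weak* topology). Then ‖x_n*‖ = 1 for every n. -/
/-! Every finite signed combination `∑ ±y_k*/(1+ε_k)` has norm at most `1` by the upper `c₀`-estimate,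
hence so does every such weak* series; this gives `‖x_n*‖ ≤ 1`. For `k ∈ N_n`, flipping all signs
but the one at `k` shows `‖2 y_k*/(1+ε_k) - x_n*‖ ≤ 1`, so `2‖y_k*‖/(1+ε_k) ≤ 1 + ‖x_n*‖`; letting
`k → ∞` inside the infinite set `N_n` gives `‖x_n*‖ ≥ 1`. -/

open Filter Topology NormedSpace

section SignedSeries

variable {Y : Type*} [NormedAddCommGroup Y] [NormedSpace ℝ Y] {ε : ℕ → ℝ} {ystar : ℕ → StrongDual ℝ Y}

lemma norm_sum_smul_div_le_one (hε : ∀ n, 0 ≤ ε n)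
    (hupper : ∀ (s : Finset ℕ) (α : ℕ → ℝ),
      ‖∑ n ∈ s, α n • ystar n‖ ≤ ⨆ n ∈ s, (1 + ε n) * |α n|)
    (t : Finset ℕ) {σ : ℕ → ℝ} (hσ : ∀ j, |σ j| ≤ 1) :
    ‖∑ j ∈ t, (σ j / (1 + ε j)) • ystar j‖ ≤ 1 := by
  refine (hupper t _).trans <| Real.iSup_le (fun j => Real.iSup_le (fun _ => ?_) zero_le_one)
    zero_le_one
  have hpos : 0 < 1 + ε j := by linarith [hε j]
  rw [abs_div, abs_of_pos hpos, mul_div_cancel₀ _ hpos.ne']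
  exact hσ j

lemma norm_le_one_of_hasSum_signed (hε : ∀ n, 0 ≤ ε n)
    (hupper : ∀ (s : Finset ℕ) (α : ℕ → ℝ),
      ‖∑ n ∈ s, α n • ystar n‖ ≤ ⨆ n ∈ s, (1 + ε n) * |α n|)
    (M : Set ℕ) {σ : ℕ → ℝ} (hσ : ∀ j, |σ j| ≤ 1) (z : StrongDual ℝ Y)
    (hz : ∀ y, HasSum (fun k : M => σ k * (ystar k y / (1 + ε k))) (z y)) :
    ‖z‖ ≤ 1 := by
  refine ContinuousLinearMap.opNorm_le_bound _ zero_le_one fun y => ?_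
  rw [one_mul]
  refine le_of_tendsto' (hz y).norm fun s => ?_
  have hpartial : ∑ k ∈ s, σ k * (ystar k y / (1 + ε k))
      = (∑ j ∈ s.map (Function.Embedding.subtype _), (σ j / (1 + ε j)) • ystar j) y := by
    simp only [Finset.sum_map, sum_apply, smul_apply,
      Function.Embedding.subtype_apply, smul_eq_mul]
    exact Finset.sum_congr rfl fun k _ => by ring
  rw [hpartial]
  calc _ ≤ ‖∑ j ∈ s.map (Function.Embedding.subtype _), (σ j / (1 + ε j)) • ystar j‖ * ‖y‖ :=
        ContinuousLinearMap.le_opNorm _ _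
    _ ≤ ‖y‖ := mul_le_of_le_one_left (norm_nonneg y) (norm_sum_smul_div_le_one hε hupper _ hσ)

lemma two_mul_norm_div_le_one_add_norm (hε : ∀ n, 0 ≤ ε n)
    (hupper : ∀ (s : Finset ℕ) (α : ℕ → ℝ),
      ‖∑ n ∈ s, α n • ystar n‖ ≤ ⨆ n ∈ s, (1 + ε n) * |α n|)
    {M : Set ℕ} (x : StrongDual ℝ Y)
    (hx : ∀ y, HasSum (fun k : M => ystar k y / (1 + ε k)) (x y)) {k₀ : ℕ} (hk₀ : k₀ ∈ M) :
    2 * ‖ystar k₀‖ / (1 + ε k₀) ≤ 1 + ‖x‖ := by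
  have hpos : 0 < 1 + ε k₀ := by linarith [hε k₀]
  set σ : ℕ → ℝ := fun j => if j = k₀ then 1 else -1
  have hσ : ∀ j, |σ j| ≤ 1 := fun j => by by_cases h : j = k₀ <;> simp [σ, h]
  have hz : ‖(2 / (1 + ε k₀)) • ystar k₀ - x‖ ≤ 1 := by
    refine norm_le_one_of_hasSum_signed hε hupper M hσ _ fun y => ?_
    have h := (hasSum_ite_eq (⟨k₀, hk₀⟩ : M) (2 * (ystar k₀ y / (1 + ε k₀)))).sub (hx y)
    have hvalue : ((2 / (1 + ε k₀)) • ystar k₀ - x) y = 2 * (ystar k₀ y / (1 + ε k₀)) - x y := by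
      simp only [sub_apply, smul_apply, smul_eq_mul]
      ring
    rw [hvalue]
    refine h.congr_fun fun k => ?_
    by_cases hk : k = ⟨k₀, hk₀⟩
    · subst hk; simp only [σ, if_true]; ring
    · have hk' : (k : ℕ) ≠ k₀ := fun h => hk (Subtype.ext h)
      simp [σ, hk, hk']
  calc 2 * ‖ystar k₀‖ / (1 + ε k₀) = ‖(2 / (1 + ε k₀)) • ystar k₀‖ := by
        rw [norm_smul, Real.norm_of_nonneg (div_pos two_pos hpos).le]; ring
    _ ≤ ‖(2 / (1 + ε k₀)) • ystar k₀ - x‖ + ‖x‖ := norm_le_norm_sub_add _ _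
    _ ≤ 1 + ‖x‖ := by linarith

end SignedSeries

theorem stmt0_general {Y : Type*} [NormedAddCommGroup Y] [NormedSpace ℝ Y]
    (ε : ℕ → ℝ) (hε : ∀ n, ε n ∈ Set.Ico (0 : ℝ) 1) (hεlim : Tendsto ε atTop (𝓝 0))
    (ystar : ℕ → StrongDual ℝ Y)
    (hupper : ∀ (s : Finset ℕ) (α : ℕ → ℝ),
      ‖∑ n ∈ s, α n • ystar n‖ ≤ ⨆ n ∈ s, (1 + ε n) * |α n|)
    (hnorm : Tendsto (fun n => ‖ystar n‖) atTop (𝓝 1))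
    (N : ℕ → Set ℕ) (hNinf : ∀ n, (N n).Infinite)
    (xstar : ℕ → StrongDual ℝ Y)
    (hx : ∀ (n : ℕ) (y : Y),
      HasSum (fun k : N n => ystar k.1 y / (1 + ε k.1)) (xstar n y)) :
    ∀ n, ‖xstar n‖ = 1 := by
  intro n
  have hε₀ : ∀ n, 0 ≤ ε n := fun n => (hε n).1
  have hle : ‖xstar n‖ ≤ 1 :=
    norm_le_one_of_hasSum_signed hε₀ hupper (N n) (σ := fun _ => 1) (fun _ => abs_one.le) _
      fun y => by simpa only [one_mul] using hx n y
  have hlim : Tendsto (fun k => 2 * ‖ystar k‖ / (1 + ε k)) atTop (𝓝 2) := by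
    have hden : Tendsto (fun k => 1 + ε k) atTop (𝓝 1) := by
      simpa using tendsto_const_nhds.add hεlim
    simpa [Pi.div_def] using (hnorm.const_mul 2).div hden one_ne_zero
  have hfreq : ∃ᶠ k in atTop, 2 * ‖ystar k‖ / (1 + ε k) ≤ 1 + ‖xstar n‖ :=
    (Nat.frequently_atTop_iff_infinite.mpr (hNinf n)).mono fun _ hk =>
      two_mul_norm_div_le_one_add_norm hε₀ hupper _ (hx n) hk
  linarith [le_of_tendsto_of_frequently hlim hfreq]

theorem stmt0 {Y : Type*} [NormedAddCommGroup Y] [NormedSpace ℝ Y] [CompleteSpace Y]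
    (ε : ℕ → ℝ) (hε : ∀ n, ε n ∈ Set.Ico (0 : ℝ) 1) (hεlim : Tendsto ε atTop (𝓝 0))
    (ystar : ℕ → StrongDual ℝ Y)
    (hupper : ∀ (s : Finset ℕ) (α : ℕ → ℝ),
      ‖∑ n ∈ s, α n • ystar n‖ ≤ ⨆ n ∈ s, (1 + ε n) * |α n|)
    (hnorm : Tendsto (fun n => ‖ystar n‖) atTop (𝓝 1))
    (N : ℕ → Set ℕ) (hNinf : ∀ n, (N n).Infinite)
    (hNdisj : Pairwise fun i j => Disjoint (N i) (N j))
    (xstar : ℕ → StrongDual ℝ Y)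
    (hx : ∀ (n : ℕ) (y : Y),
      HasSum (fun k : N n => ystar k.1 y / (1 + ε k.1)) (xstar n y)) :
    ∀ n, ‖xstar n‖ = 1 :=
  stmt0_general ε hε hεlim ystar hupper hnorm N hNinf xstar hx
end

section
/- Let Y be a Banach space, (ε_n) a null sequence in [0,1), and (y_n*) a sequence in Y* such that ‖∑ α_n y_n*‖ ≤ sup_n (1+ε_n)|α_n| for all (α_n) ∈ c₀ and ‖y_n*‖ → 1. Let (N_n) be pairwise disjoint infinite subsets of ℕ and x_n* = ∑_{k ∈ N_n} y_k*/(1+ε_k) (weak* convergent series). Then ‖∑ α_n x_n*‖ = sup_n |α_n| for every bounded scalar sequence (α_n); that is, the x_n* generate ℓ∞ isometrically. -/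
open Filter Topology NormedSpace

/-! Put `γ p = α n / (1 + ε k)` on the disjoint union of the blocks `N n`, indexed by
`p = ⟨n, k⟩`. The upper estimate makes `∑ γ_p y_k*` weak* absolutely summable with norm at
most `M = sup |α n|`, and regrouping by blocks gives `∑ α n x_n*`. Conversely, flipping the
sign of all coefficients if necessary and raising the one at a single `k ∈ N m` to the extreme
value `M / (1 + ε k)` keeps the norm at most `M`, which forces
`(M + |α m|) ‖y_k*‖ ≤ (1 + ε k) (M + ‖S‖)`; letting `k → ∞` in `N m` gives `|α m| ≤ ‖S‖`. -/

section

variable {Y : Type*} [NormedAddCommGroup Y] [NormedSpace ℝ Y] {ι κ : Type*}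

def SupUpperEstimate (f : ι → StrongDual ℝ Y) (w : ι → ℝ) : Prop :=
  ∀ (s : Finset ι) (β : ι → ℝ) (M : ℝ), 0 ≤ M → (∀ i ∈ s, w i * |β i| ≤ M) →
    ‖∑ i ∈ s, β i • f i‖ ≤ M

lemma supUpperEstimate_of_norm_sum_le_iSup {f : ι → StrongDual ℝ Y} {w : ι → ℝ}
    (h : ∀ (s : Finset ι) (β : ι → ℝ), ‖∑ i ∈ s, β i • f i‖ ≤ ⨆ i ∈ s, w i * |β i|) :
    SupUpperEstimate f w := fun s β _ hM hβ =>
  (h s β).trans <| Real.iSup_le (fun i => Real.iSup_le (hβ i) hM) hM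

namespace SupUpperEstimate

variable {f : ι → StrongDual ℝ Y} {w : ι → ℝ}

lemma comp_injective (hf : SupUpperEstimate f w) {φ : κ → ι} (hφ : φ.Injective) :
    SupUpperEstimate (f ∘ φ) (w ∘ φ) := by
  intro s β M hM hβ
  have hsum : ∑ i ∈ s, β i • (f ∘ φ) i =
      ∑ j ∈ s.map ⟨φ, hφ⟩, Function.extend φ β 0 j • f j := by
    simp [hφ.extend_apply]
  rw [hsum]
  refine hf _ _ M hM fun j hj => ?_
  obtain ⟨i, hi, rfl⟩ := Finset.mem_map.1 hj
  simpa [hφ.extend_apply] using hβ i hi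

lemma exists_hasSum_apply (hf : SupUpperEstimate f w) {γ : ι → ℝ} {M : ℝ} (hM : 0 ≤ M)
    (hγ : ∀ i, w i * |γ i| ≤ M) :
    ∃ S : StrongDual ℝ Y, (∀ y, HasSum (fun i => γ i * f i y) (S y)) ∧ ‖S‖ ≤ M := by
  have hfin (y : Y) (s : Finset ι) : ∑ i ∈ s, |γ i * f i y| ≤ M * ‖y‖ := by
    -- test the estimate against the signs of the terms
    set β : ι → ℝ := fun i => if γ i * f i y < 0 then -γ i else γ i
    have hβ : ∀ i ∈ s, w i * |β i| ≤ M := fun i _ => by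
      simpa only [β, apply_ite abs, abs_neg, ite_self] using hγ i
    have hβf : ∀ i, β i * f i y = |γ i * f i y| := fun i => by
      by_cases h : γ i * f i y < 0
      · simp only [β, if_pos h, abs_of_neg h, neg_mul]
      · simp only [β, if_neg h, abs_of_nonneg (not_lt.1 h)]
    calc ∑ i ∈ s, |γ i * f i y| = (∑ i ∈ s, β i • f i) y := by
          simp only [← hβf, sum_apply, smul_apply, smul_eq_mul]
      _ ≤ ‖∑ i ∈ s, β i • f i‖ * ‖y‖ :=
          (le_abs_self _).trans ((∑ i ∈ s, β i • f i).le_opNorm y)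
      _ ≤ M * ‖y‖ := by gcongr; exact hf s β M hM hβ
  have habs (y : Y) : Summable fun i => |γ i * f i y| :=
    summable_of_sum_le (fun i => abs_nonneg _) (hfin y)
  have hsum (y : Y) : Summable fun i => γ i * f i y := (habs y).of_abs
  let S : Y →ₗ[ℝ] ℝ :=
    { toFun := fun y => ∑' i, γ i * f i y
      map_add' := fun y z => by
        simp only [map_add, mul_add, (hsum y).tsum_add (hsum z)]
      map_smul' := fun c y => by
        simp only [map_smul, smul_eq_mul, mul_left_comm _ c, tsum_mul_left, RingHom.id_apply] }
  have hS (y : Y) : ‖S y‖ ≤ M * ‖y‖ := by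
    have habs' : Summable fun i => ‖γ i * f i y‖ := habs y
    exact (norm_tsum_le_tsum_norm habs').trans (habs'.tsum_le_of_sum_le (hfin y))
  exact ⟨S.mkContinuous M hS, fun y => (hsum y).hasSum,
    LinearMap.mkContinuous_norm_le _ hM _⟩

lemma mul_norm_le_of_hasSum (hf : SupUpperEstimate f w) {γ : ι → ℝ} {M : ℝ} (hM : 0 ≤ M)
    (hγ : ∀ i, w i * |γ i| ≤ M) {S : StrongDual ℝ Y}
    (hS : ∀ y, HasSum (fun i => γ i * f i y) (S y)) (i₀ : ι) (hw : 0 < w i₀) :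
    (M + w i₀ * |γ i₀|) * ‖f i₀‖ ≤ w i₀ * (M + ‖S‖) := by
  classical
  set t : ℝ := if 0 ≤ γ i₀ then -1 else 1
  have ht : t * γ i₀ = -|γ i₀| := by
    by_cases h : 0 ≤ γ i₀
    · simp [t, h, abs_of_nonneg h]
    · simp [t, h, abs_of_neg (not_le.1 h)]
  have ht1 : |t| = 1 := by simp only [t]; split_ifs <;> simp
  set c : ℝ := M / w i₀ + |γ i₀|
  set γ' : ι → ℝ := fun i => t * γ i + if i = i₀ then c else 0
  have hγ' : ∀ i, w i * |γ' i| ≤ M := by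
    intro i
    by_cases hi : i = i₀
    · subst hi
      have : γ' i = M / w i := by simp only [γ', if_pos, ht, c]; ring
      rw [this, abs_div, abs_of_nonneg hM, abs_of_pos hw, mul_div_cancel₀ _ hw.ne']
    · simpa [γ', hi, abs_mul, ht1] using hγ i
  obtain ⟨S', hS', hS'M⟩ := hf.exists_hasSum_apply hM hγ'
  have hS'eq : S' = t • S + c • f i₀ := by
    ext y
    refine (hS' y).unique ?_
    have hterm : (fun i => γ' i * f i y) =
        fun i => t * (γ i * f i y) + if i = i₀ then c * f i₀ y else 0 := by
      funext i
      by_cases hi : i = i₀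
      · subst hi; simp only [γ', if_pos]; ring
      · simp only [γ', if_neg hi]; ring
    simpa [hterm] using ((hS y).mul_left t).add (hasSum_ite_eq i₀ (c * f i₀ y))
  have hc : c * ‖f i₀‖ ≤ M + ‖S‖ := calc
    c * ‖f i₀‖ = ‖S' - t • S‖ := by
      rw [hS'eq, add_sub_cancel_left, norm_smul, Real.norm_eq_abs, abs_of_nonneg (by positivity)]
    _ ≤ ‖S'‖ + ‖t • S‖ := norm_sub_le _ _
    _ ≤ M + ‖S‖ := by rw [norm_smul, Real.norm_eq_abs, ht1, one_mul]; linarith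
  have hwc : M + w i₀ * |γ i₀| = w i₀ * c := by simp only [c]; field_simp
  rw [hwc, mul_assoc]
  gcongr

end SupUpperEstimate

end

theorem stmt1_general {Y : Type*} [NormedAddCommGroup Y] [NormedSpace ℝ Y]
    (ε : ℕ → ℝ) (hε : ∀ n, ε n ∈ Set.Ico (0 : ℝ) 1) (hεlim : Tendsto ε atTop (𝓝 0))
    (ystar : ℕ → StrongDual ℝ Y)
    (hupper : ∀ (s : Finset ℕ) (α : ℕ → ℝ),
      ‖∑ n ∈ s, α n • ystar n‖ ≤ ⨆ n ∈ s, (1 + ε n) * |α n|)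
    (hnorm : Tendsto (fun n => ‖ystar n‖) atTop (𝓝 1))
    (N : ℕ → Set ℕ) (hNinf : ∀ n, (N n).Infinite)
    (hNdisj : Pairwise fun i j => Disjoint (N i) (N j))
    (xstar : ℕ → StrongDual ℝ Y)
    (hx : ∀ (n : ℕ) (y : Y),
      HasSum (fun k : N n => ystar k.1 y / (1 + ε k.1)) (xstar n y)) :
    ∀ α : ℕ → ℝ, (∃ C, ∀ n, |α n| ≤ C) →
      ∃ S : StrongDual ℝ Y, (∀ y : Y, HasSum (fun n => α n * xstar n y) (S y)) ∧
        ‖S‖ = ⨆ n, |α n| := by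
  rintro α ⟨C, hC⟩
  set M := ⨆ n, |α n|
  have hM (n : ℕ) : |α n| ≤ M := le_ciSup ⟨C, by rintro _ ⟨n, rfl⟩; exact hC n⟩ n
  have hM0 : 0 ≤ M := (abs_nonneg _).trans (hM 0)
  have hw (k : ℕ) : 0 < 1 + ε k := by linarith [(hε k).1]
  have hf : SupUpperEstimate (fun p : Σ n, N n => ystar p.2) (fun p => 1 + ε p.2) :=
    (supUpperEstimate_of_norm_sum_le_iSup hupper).comp_injective
      (Subtype.val_injective.comp (Set.sigmaToiUnion_injective N hNdisj))
  set γ : (Σ n, N n) → ℝ := fun p => α p.1 / (1 + ε p.2)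
  have hγ (p : Σ n, N n) : (1 + ε p.2) * |γ p| = |α p.1| := by
    rw [abs_div, abs_of_pos (hw _), mul_div_cancel₀ _ (hw _).ne']
  have hγM (p : Σ n, N n) : (1 + ε p.2) * |γ p| ≤ M := (hγ p).trans_le (hM _)
  obtain ⟨S, hS, hSM⟩ := hf.exists_hasSum_apply hM0 hγM
  refine ⟨S, fun y => (hS y).sigma fun n => ?_, le_antisymm hSM ?_⟩
  · simpa only [γ, mul_div_assoc', div_mul_eq_mul_div] using (hx n y).mul_left (α n)
  refine Real.iSup_le (fun m => ?_) (norm_nonneg S)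
  have hb : ∀ k ∈ N m, (M + |α m|) * ‖ystar k‖ ≤ (1 + ε k) * (M + ‖S‖) := fun k hk => by
    have h := hf.mul_norm_le_of_hasSum hM0 hγM hS ⟨m, k, hk⟩ (hw k)
    rwa [show (1 + ε k) * |γ ⟨m, k, hk⟩| = |α m| from hγ ⟨m, k, hk⟩] at h
  have := le_of_tendsto_of_tendsto_of_frequently (hnorm.const_mul (M + |α m|))
    ((hεlim.const_add 1).mul_const (M + ‖S‖))
    (Nat.frequently_atTop_iff_infinite.2 ((hNinf m).mono hb))
  linarith

theorem stmt1 {Y : Type*} [NormedAddCommGroup Y] [NormedSpace ℝ Y] [CompleteSpace Y]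
    (ε : ℕ → ℝ) (hε : ∀ n, ε n ∈ Set.Ico (0 : ℝ) 1) (hεlim : Tendsto ε atTop (𝓝 0))
    (ystar : ℕ → StrongDual ℝ Y)
    (hupper : ∀ (s : Finset ℕ) (α : ℕ → ℝ),
      ‖∑ n ∈ s, α n • ystar n‖ ≤ ⨆ n ∈ s, (1 + ε n) * |α n|)
    (hnorm : Tendsto (fun n => ‖ystar n‖) atTop (𝓝 1))
    (N : ℕ → Set ℕ) (hNinf : ∀ n, (N n).Infinite)
    (hNdisj : Pairwise fun i j => Disjoint (N i) (N j))
    (xstar : ℕ → StrongDual ℝ Y)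
    (hx : ∀ (n : ℕ) (y : Y),
      HasSum (fun k : N n => ystar k.1 y / (1 + ε k.1)) (xstar n y)) :
    ∀ α : ℕ → ℝ, (∃ C, ∀ n, |α n| ≤ C) →
      ∃ S : StrongDual ℝ Y, (∀ y : Y, HasSum (fun n => α n * xstar n y) (S y)) ∧
        ‖S‖ = ⨆ n, |α n| :=
  stmt1_general ε hε hεlim ystar hupper hnorm N hNinf hNdisj xstar hx
end

section
/- Every bounded sequence (x_n) in a Banach space admits, for each ε > 0, a subsequence (x_{n_k}) that is c_J-stable (meaning c̃_J(x_{n_k}) = c_J(x_{n_k}), where c̃_J denotes the supremum of James constants over all further subsequences) and satisfies c_J(x_{n_k}) ≥ c̃_J(x_n) − ε. -/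
open Filter Topology

/-- `cm x m` is the infimum of `‖∑_{n≥m} α_n x_n‖` over ℓ¹-normalized
coefficient sequences supported on `{m, m+1, ...}`. -/
noncomputable def cm {X : Type*} [NormedAddCommGroup X] [NormedSpace ℝ X]
    (x : ℕ → X) (m : ℕ) : ℝ :=
  sInf {r : ℝ | ∃ α : ℕ → ℝ, (∀ n < m, α n = 0) ∧ Summable (fun n => |α n|) ∧
    (∑' n, |α n|) = 1 ∧ r = ‖∑' n, α n • x n‖}

/-- The James constant of a bounded sequence. -/
noncomputable def cJ {X : Type*} [NormedAddCommGroup X] [NormedSpace ℝ X]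
    (x : ℕ → X) : ℝ :=
  ⨆ m, cm x m

/-- The supremum of the James constants over all subsequences. -/
noncomputable def cJtilde {X : Type*} [NormedAddCommGroup X] [NormedSpace ℝ X]
    (x : ℕ → X) : ℝ :=
  ⨆ f : {f : ℕ → ℕ // StrictMono f}, cJ (x ∘ f.1)

namespace Stmt7Aux

variable {X : Type*} [NormedAddCommGroup X] [NormedSpace ℝ X]

def cmSet (x : ℕ → X) (m : ℕ) : Set ℝ :=
  {r : ℝ | ∃ α : ℕ → ℝ, (∀ n < m, α n = 0) ∧ Summable (fun n => |α n|) ∧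
    (∑' n, |α n|) = 1 ∧ r = ‖∑' n, α n • x n‖}

lemma cm_def (x : ℕ → X) (m : ℕ) : cm x m = sInf (cmSet x m) := rfl

lemma mem_cmSet_self (x : ℕ → X) (m : ℕ) : ‖x m‖ ∈ cmSet x m := by
  classical
  refine ⟨fun n => if n = m then 1 else 0, fun n hn => if_neg hn.ne, ?_, ?_, ?_⟩
  · apply summable_of_ne_finset_zero (s := {m})
    intro n hn
    simp only [Finset.mem_singleton] at hn
    simp [hn]
  · have : (fun n => |if n = m then (1:ℝ) else 0|) = fun n => if n = m then (1:ℝ) else 0 := by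
      funext n; by_cases h : n = m <;> simp [h]
    rw [this, tsum_ite_eq]
  · have : (fun n => (if n = m then (1:ℝ) else 0) • x n) = fun n => if n = m then x m else 0 := by
      funext n; by_cases h : n = m <;> simp [h]
    rw [this, tsum_ite_eq]

lemma cmSet_nonempty (x : ℕ → X) (m : ℕ) : (cmSet x m).Nonempty :=
  ⟨_, mem_cmSet_self x m⟩

lemma cmSet_bddBelow (x : ℕ → X) (m : ℕ) : BddBelow (cmSet x m) := by
  refine ⟨0, ?_⟩
  rintro r ⟨α, -, -, -, rfl⟩
  exact norm_nonneg _

lemma cm_le_norm (x : ℕ → X) (m : ℕ) : cm x m ≤ ‖x m‖ :=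
  csInf_le (cmSet_bddBelow x m) (mem_cmSet_self x m)

lemma cm_mono (x : ℕ → X) {m m' : ℕ} (h : m ≤ m') : cm x m ≤ cm x m' := by
  apply csInf_le_csInf (cmSet_bddBelow x m) (cmSet_nonempty x m')
  rintro r ⟨α, hα0, hαs, hα1, rfl⟩
  exact ⟨α, fun n hn => hα0 n (hn.trans_le h), hαs, hα1, rfl⟩

lemma bddAbove_cm {x : ℕ → X} {C : ℝ} (hx : ∀ n, ‖x n‖ ≤ C) :
    BddAbove (Set.range fun m => cm x m) := by
  refine ⟨C, ?_⟩
  rintro r ⟨m, rfl⟩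
  exact (cm_le_norm x m).trans (hx m)

lemma cJ_le {x : ℕ → X} {C : ℝ} (hx : ∀ n, ‖x n‖ ≤ C) : cJ x ≤ C :=
  ciSup_le fun m => (cm_le_norm x m).trans (hx m)

lemma cm_le_cJ {x : ℕ → X} {C : ℝ} (hx : ∀ n, ‖x n‖ ≤ C) (m : ℕ) : cm x m ≤ cJ x :=
  le_ciSup (bddAbove_cm hx) m

/-- Key inclusion: a normalized combination of `y`-tail is one of the `z`-tail if `y`
agrees eventually with `z ∘ g`. -/
lemma cmSet_subset {y z : ℕ → X} {g : ℕ → ℕ} (hg : StrictMono g) {m₀ M : ℕ}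
    (hm : m₀ ≤ M) (hyz : ∀ j, m₀ ≤ j → y j = z (g j)) :
    cmSet y M ⊆ cmSet z (g M) := by
  classical
  rintro r ⟨α, hα0, hαs, hα1, rfl⟩
  set β : ℕ → ℝ := fun n => if h : ∃ j, g j = n then α h.choose else 0 with hβdef
  have hβg : ∀ j, β (g j) = α j := by
    intro j
    have h : ∃ j', g j' = g j := ⟨j, rfl⟩
    have := hg.injective h.choose_spec
    simp only [hβdef, dif_pos h, this]
  have hβ0 : ∀ n, n ∉ Set.range g → β n = 0 := by
    intro n hn
    exact dif_neg (by simpa [Set.range] using hn)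
  refine ⟨β, ?_, ?_, ?_, ?_⟩
  · intro n hn
    by_cases h : n ∈ Set.range g
    · obtain ⟨j, rfl⟩ := h
      rw [hβg]
      exact hα0 j (hg.lt_iff_lt.mp hn)
    · exact hβ0 n h
  · rw [← Function.Injective.summable_iff hg.injective
      (f := fun n => |β n|) (fun n hn => by show |β n| = 0; rw [hβ0 n hn]; simp)]
    have : ((fun n => |β n|) ∘ g) = fun j => |α j| := by
      funext j; simp [Function.comp, hβg]
    rwa [this]
  · rw [← hα1]
    symm
    have : (fun j => |α j|) = fun j => |β (g j)| := by funext j; rw [hβg]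
    rw [this]
    apply Function.Injective.tsum_eq hg.injective (f := fun n => |β n|)
    intro n hn
    simp only [Function.mem_support, ne_eq, not_not] at hn ⊢
    by_contra h
    exact hn (by rw [hβ0 n (by simpa using h)]; simp)
  · congr 1
    have h1 : ∑' n, β n • z n = ∑' j, β (g j) • z (g j) := by
      symm
      apply Function.Injective.tsum_eq hg.injective (f := fun n => β n • z n)
      intro n hn
      simp only [Function.mem_support, ne_eq] at hn
      by_contra h
      exact hn (by rw [hβ0 n (by simpa using h)]; simp)
    rw [h1]
    apply tsum_congr
    intro j
    rw [hβg]
    by_cases hj : m₀ ≤ j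
    · rw [hyz j hj]
    · rw [hα0 j (lt_of_lt_of_le (not_le.mp hj) hm)]
      simp

lemma cm_le_shift {y z : ℕ → X} {g : ℕ → ℕ} (hg : StrictMono g) {m₀ M : ℕ}
    (hm : m₀ ≤ M) (hyz : ∀ j, m₀ ≤ j → y j = z (g j)) :
    cm z (g M) ≤ cm y M :=
  csInf_le_csInf (cmSet_bddBelow z (g M)) (cmSet_nonempty y M) (cmSet_subset hg hm hyz)

/-- If `y` eventually equals `z ∘ g` then `cJ z ≤ cJ y`. -/
lemma cJ_le_shift {y z : ℕ → X} {g : ℕ → ℕ} (hg : StrictMono g) {m₀ : ℕ}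
    (hyz : ∀ j, m₀ ≤ j → y j = z (g j)) {C : ℝ} (hy : ∀ n, ‖y n‖ ≤ C) :
    cJ z ≤ cJ y := by
  apply ciSup_le
  intro m
  calc cm z m ≤ cm z (g (max m m₀)) :=
        cm_mono z ((le_max_left m m₀).trans (hg.le_apply))
    _ ≤ cm y (max m m₀) := cm_le_shift hg (le_max_right m m₀) hyz
    _ ≤ cJ y := cm_le_cJ hy _

lemma cm_congr {y z : ℕ → X} {m : ℕ} (h : ∀ n, m ≤ n → y n = z n) : cm y m = cm z m := by
  rw [cm_def, cm_def]
  congr 1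
  ext r
  constructor <;> rintro ⟨α, hα0, hαs, hα1, rfl⟩ <;> refine ⟨α, hα0, hαs, hα1, ?_⟩ <;>
    · congr 1
      apply tsum_congr
      intro n
      by_cases hn : m ≤ n
      · rw [h n hn]
      · rw [hα0 n (not_le.mp hn)]
        simp

/-- If `z` eventually equals `w ∘ ψ` then `cJ z ≤ cJ (w ∘ ψ)`. -/
lemma cJ_le_comp {z w : ℕ → X} {ψ : ℕ → ℕ} {m₀ : ℕ}
    (h : ∀ j, m₀ ≤ j → z j = w (ψ j)) {C : ℝ} (hw : ∀ n, ‖w n‖ ≤ C) :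
    cJ z ≤ cJ (w ∘ ψ) := by
  apply ciSup_le
  intro m
  calc cm z m ≤ cm z (max m m₀) := cm_mono z (le_max_left m m₀)
    _ = cm (w ∘ ψ) (max m m₀) :=
        cm_congr (fun n hn => h n ((le_max_right m m₀).trans hn))
    _ ≤ cJ (w ∘ ψ) := cm_le_cJ (fun n => hw (ψ n)) _

instance : Nonempty {f : ℕ → ℕ // StrictMono f} := ⟨⟨id, strictMono_id⟩⟩

lemma bddAbove_cJsubs {x : ℕ → X} {C : ℝ} (hx : ∀ n, ‖x n‖ ≤ C) :
    BddAbove (Set.range fun f : {f : ℕ → ℕ // StrictMono f} => cJ (x ∘ f.1)) := by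
  refine ⟨C, ?_⟩
  rintro r ⟨f, rfl⟩
  exact cJ_le (fun n => hx (f.1 n))

lemma cJ_le_cJtilde {x : ℕ → X} {C : ℝ} (hx : ∀ n, ‖x n‖ ≤ C)
    (f : ℕ → ℕ) (hf : StrictMono f) : cJ (x ∘ f) ≤ cJtilde x :=
  le_ciSup (bddAbove_cJsubs hx) ⟨f, hf⟩

end Stmt7Aux

theorem stmt7 {X : Type*} [NormedAddCommGroup X] [NormedSpace ℝ X] [CompleteSpace X]
    (x : ℕ → X) (hbdd : ∃ C, ∀ n, ‖x n‖ ≤ C) (ε : ℝ) (hε : 0 < ε) :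
    ∃ f : ℕ → ℕ, StrictMono f ∧ cJtilde (x ∘ f) = cJ (x ∘ f) ∧
      cJtilde x - ε ≤ cJ (x ∘ f) := by
  classical
  open Stmt7Aux in
  obtain ⟨C, hC⟩ := hbdd
  -- one step of the choice
  have step : ∀ (f : {f : ℕ → ℕ // StrictMono f}) (δ : ℝ), 0 < δ →
      ∃ g : {f : ℕ → ℕ // StrictMono f},
        cJtilde (x ∘ f.1) - δ < cJ (x ∘ (f.1 ∘ g.1)) := by
    intro f δ hδ
    have h1 : cJtilde (x ∘ f.1) - δ < cJtilde (x ∘ f.1) := by linarith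
    obtain ⟨g, hg⟩ := exists_lt_of_lt_ciSup h1
    exact ⟨g, hg⟩
  choose G hG using step
  -- the nested sequence of subsequences
  let F : ℕ → {f : ℕ → ℕ // StrictMono f} := fun k => Nat.rec
    (G ⟨id, strictMono_id⟩ ε hε)
    (fun k fk => ⟨fk.1 ∘ (G fk (1/((k:ℝ)+1)) (by positivity)).1,
      fk.2.comp (G fk (1/((k:ℝ)+1)) (by positivity)).2⟩) k
  let gs : ℕ → (ℕ → ℕ) := fun k => (G (F k) (1/((k:ℝ)+1)) (by positivity)).1
  have hgs : ∀ k, StrictMono (gs k) := fun k => (G (F k) _ _).2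
  have hFs : ∀ k, (F (k+1)).1 = (F k).1 ∘ gs k := fun k => rfl
  have hF0 : cJtilde x - ε < cJ (x ∘ (F 0).1) := hG ⟨id, strictMono_id⟩ ε hε
  have hFstep : ∀ k, cJtilde (x ∘ (F k).1) - 1/((k:ℝ)+1) < cJ (x ∘ (F (k+1)).1) :=
    fun k => hG (F k) (1/((k:ℝ)+1)) (by positivity)
  -- transition maps
  let D : ℕ → ℕ → (ℕ → ℕ) := fun k i => Nat.rec id (fun i t => t ∘ gs (k+i)) i
  have hD0 : ∀ k, D k 0 = id := fun k => rfl
  have hDs : ∀ k i, D k (i+1) = D k i ∘ gs (k+i) := fun k i => rfl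
  have hDmono : ∀ k i, StrictMono (D k i) := by
    intro k i
    induction i with
    | zero => exact strictMono_id
    | succ i ih => exact ih.comp (hgs (k+i))
  have hFD : ∀ k i, (F (k+i)).1 = (F k).1 ∘ D k i := by
    intro k i
    induction i with
    | zero => rfl
    | succ i ih =>
      calc (F (k+(i+1))).1 = (F (k+i)).1 ∘ gs (k+i) := hFs (k+i)
        _ = ((F k).1 ∘ D k i) ∘ gs (k+i) := by rw [ih]
        _ = (F k).1 ∘ D k (i+1) := rfl
  -- the diagonal sequence
  let h : ℕ → ℕ := fun k => (F k).1 k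
  have hmono : StrictMono h := by
    apply strictMono_nat_of_lt_succ
    intro k
    have h1 : h (k+1) = (F k).1 (gs k (k+1)) := by
      show (F (k+1)).1 (k+1) = _
      rw [hFs k]; rfl
    rw [h1]
    exact lt_of_lt_of_le ((F k).2 (lt_add_one k)) ((F k).2.monotone (hgs k).le_apply)
  -- the comparison maps φ
  let φ : ℕ → ℕ → ℕ := fun k j => if j < k then j else D k (j - k) j
  have hφdef : ∀ k j, k ≤ j → φ k j = D k (j - k) j := fun k j hj => if_neg (not_lt.mpr hj)
  have hφlt : ∀ k j, j < k → φ k j = j := fun k j hj => if_pos hj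
  have hφmono : ∀ k, StrictMono (φ k) := by
    intro k
    apply strictMono_nat_of_lt_succ
    intro j
    by_cases hj : j < k
    · rw [hφlt k j hj]
      by_cases hj1 : j + 1 < k
      · rw [hφlt k (j+1) hj1]; exact lt_add_one j
      · rw [hφdef k (j+1) (not_lt.mp hj1)]
        exact lt_of_lt_of_le (lt_add_one j) (hDmono k _).le_apply
    · have hj' : k ≤ j := not_lt.mp hj
      rw [hφdef k j hj', hφdef k (j+1) (hj'.trans (Nat.le_succ j))]
      have e1 : j + 1 - k = (j - k) + 1 := Nat.succ_sub hj'
      have e2 : k + (j - k) = j := Nat.add_sub_cancel' hj'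
      rw [e1, hDs k (j-k)]
      have : gs (k + (j-k)) (j+1) > j := by
        rw [e2]
        exact lt_of_lt_of_le (lt_add_one j) (hgs j).le_apply
      exact (hDmono k (j-k)) this
  have hφeq : ∀ k j, k ≤ j → h j = (F k).1 (φ k j) := by
    intro k j hj
    have e2 : k + (j - k) = j := Nat.add_sub_cancel' hj
    rw [hφdef k j hj]
    calc h j = (F (k + (j-k))).1 j := by rw [e2]
      _ = (F k).1 (D k (j-k) j) := by rw [hFD k (j-k)]; rfl
  have hy : ∀ n, ‖(x ∘ h) n‖ ≤ C := fun n => hC _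
  refine ⟨h, hmono, ?_, ?_⟩
  · -- cJtilde (x∘h) = cJ (x∘h)
    apply le_antisymm
    · have key : ∀ k : ℕ, cJtilde (x ∘ h) ≤ cJ (x ∘ h) + 1/((k:ℝ)+1) := by
        intro k
        have hA : cJtilde (x ∘ h) ≤ cJtilde (x ∘ (F k).1) := by
          apply ciSup_le
          rintro ⟨g, hg⟩
          have h1 : cJ ((x ∘ h) ∘ g) ≤ cJ ((x ∘ (F k).1) ∘ (φ k ∘ g)) := by
            apply cJ_le_comp (m₀ := k) (C := C)
            · intro j hj
              have : k ≤ g j := hj.trans hg.le_apply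
              show x (h (g j)) = x ((F k).1 (φ k (g j)))
              rw [hφeq k (g j) this]
            · intro n; exact hC _
          exact h1.trans (cJ_le_cJtilde (fun n => hC _) _ ((hφmono k).comp hg))
        have hB := hFstep k
        have hCk : cJ (x ∘ (F (k+1)).1) ≤ cJ (x ∘ h) := by
          apply cJ_le_shift (hφmono (k+1)) (m₀ := k+1) _ hy
          intro j hj
          show x (h j) = x ((F (k+1)).1 (φ (k+1) j))
          rw [hφeq (k+1) j hj]
        linarith
      by_contra hlt
      push_neg at hlt
      obtain ⟨k, hk⟩ := exists_nat_one_div_lt (show (0:ℝ) < cJtilde (x∘h) - cJ (x∘h) by linarith)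
      linarith [key k]
    · exact cJ_le_cJtilde (fun n => hC _) id strictMono_id
  · -- cJtilde x - ε ≤ cJ (x ∘ h)
    have h1 : cJ (x ∘ (F 0).1) ≤ cJ (x ∘ h) := by
      apply cJ_le_shift (hφmono 0) (m₀ := 0) _ hy
      intro j hj
      show x (h j) = x ((F 0).1 (φ 0 j))
      rw [hφeq 0 j hj]
    linarith
end

section
/- Let X be a Banach space, (x_n*) a sequence in X* with ‖∑ α_n x_n*‖ ≤ sup|α_n| for all (α_n) ∈ c₀, and (x_m) a bounded sequence in X with c̃_J(x_m) = c̃. Suppose there exist κ > 0 and subsequences such that x_{n_m}*(x_{p_{n_m}}) > κ + c̃ and ∑_{j≠m} |x_{n_j}*(x_{p_{n_m}})| < κ/2 for all m. Then ‖∑_m α_m x_{p_{n_m}}‖ ≥ (κ/2 + c̃) ∑_m |α_m| for all (α_m) ∈ ℓ¹, hence c_J(x_{p_{n_m}}) ≥ κ/2 + c̃ > c̃, a contradiction; consequently no such κ and subsequences exist. -/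
/-!
Write `y_m = x_{p_{n_m}}` and test `v = ∑ α_m y_m` against the functional
`∑_j sign(α_j) x*_{n_j}`, which has norm at most `1` by the upper `c₀`-estimate. The diagonal
terms contribute at least `(κ + c̃) |α_m|` and the off-diagonal ones at most `(κ/2) |α_m|`, so
`‖v‖ ≥ (κ/2 + c̃) ∑ |α_m|`. Hence `c_J(y) ≥ κ/2 + c̃ > c̃`, while `c_J(y) ≤ c̃` because `y` is a
subsequence of `x`.
-/

open Filter Topology

section UpperC0Estimate

variable {X : Type*} [NormedAddCommGroup X] [NormedSpace ℝ X]

def HasUpperC0Estimate (f : ℕ → StrongDual ℝ X) : Prop :=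
  ∀ (s : Finset ℕ) (θ : ℕ → ℝ), (∀ j, |θ j| ≤ 1) → ‖∑ j ∈ s, θ j • f j‖ ≤ 1

lemma abs_sign_le_one (a : ℝ) : |(SignType.sign a : ℝ)| ≤ 1 := by
  rcases SignType.sign a with _ | _ | _ <;> simp

lemma hasUpperC0Estimate_comp {f : ℕ → StrongDual ℝ X}
    (hf : ∀ (s : Finset ℕ) (α : ℕ → ℝ), ‖∑ n ∈ s, α n • f n‖ ≤ ⨆ n ∈ s, |α n|)
    {n : ℕ → ℕ} (hn : n.Injective) : HasUpperC0Estimate (f ∘ n) := by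
  classical
  intro s θ hθ
  set γ : ℕ → ℝ := Function.extend n θ 0
  have hγ : ∀ k, |γ k| ≤ 1 := by
    intro k
    by_cases hk : ∃ j, n j = k
    · obtain ⟨j, rfl⟩ := hk
      simpa [γ, hn.extend_apply] using hθ j
    · simp [γ, Function.extend_apply' _ _ _ hk]
  calc ‖∑ j ∈ s, θ j • (f ∘ n) j‖ = ‖∑ k ∈ s.image n, γ k • f k‖ := by
        rw [Finset.sum_image hn.injOn]
        simp [γ, hn.extend_apply]
    _ ≤ ⨆ k ∈ s.image n, |γ k| := hf _ _
    _ ≤ 1 := Real.iSup_le (fun k => Real.iSup_le (fun _ => hγ k) zero_le_one) zero_le_one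

variable {f : ℕ → StrongDual ℝ X}

namespace HasUpperC0Estimate

lemma sum_mul_apply_le_norm (hf : HasUpperC0Estimate f) {θ : ℕ → ℝ} (hθ : ∀ j, |θ j| ≤ 1)
    (s : Finset ℕ) (z : X) : ∑ j ∈ s, θ j * f j z ≤ ‖z‖ :=
  calc ∑ j ∈ s, θ j * f j z = (∑ j ∈ s, θ j • f j) z := by simp
    _ ≤ ‖∑ j ∈ s, θ j • f j‖ * ‖z‖ := (le_abs_self _).trans ((∑ j ∈ s, θ j • f j).le_opNorm z)
    _ ≤ ‖z‖ := mul_le_of_le_one_left (norm_nonneg z) (hf s θ hθ)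

lemma summable_abs_apply (hf : HasUpperC0Estimate f) (z : X) :
    Summable (fun j => |f j z|) :=
  summable_of_sum_le (fun j => abs_nonneg _) fun s => by
    simpa only [sign_mul_self] using
      hf.sum_mul_apply_le_norm (fun j => abs_sign_le_one (f j z)) s z

lemma summable_mul_apply (hf : HasUpperC0Estimate f) {θ : ℕ → ℝ} (hθ : ∀ j, |θ j| ≤ 1)
    (z : X) : Summable (fun j => θ j * f j z) :=
  (hf.summable_abs_apply z).of_norm_bounded fun j => by
    rw [Real.norm_eq_abs, abs_mul]
    exact mul_le_of_le_one_left (abs_nonneg _) (hθ j)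

lemma tsum_mul_apply_le_norm (hf : HasUpperC0Estimate f) {θ : ℕ → ℝ} (hθ : ∀ j, |θ j| ≤ 1)
    (z : X) : ∑' j, θ j * f j z ≤ ‖z‖ :=
  (hf.summable_mul_apply hθ z).tsum_le_of_sum_le (hf.sum_mul_apply_le_norm hθ · z)

lemma abs_tsum_mul_apply_sub_le (hf : HasUpperC0Estimate f) {θ : ℕ → ℝ}
    (hθ : ∀ j, |θ j| ≤ 1) (z : X) (m : ℕ) :
    |∑' j, θ j * f j z - θ m * f m z| ≤ ∑' j : {j : ℕ // j ≠ m}, |f j.1 z| := by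
  have hs := hf.summable_mul_apply hθ z
  have hsplit := Summable.tsum_add_tsum_compl (s := {j | j ≠ m}) (hs.subtype _) (hs.subtype _)
  rw [show {j | j ≠ m}ᶜ = {m} by ext; simp, tsum_singleton m (fun j => θ j * f j z)] at hsplit
  rw [← hsplit, add_sub_cancel_right, ← Real.norm_eq_abs]
  refine (norm_tsum_le_tsum_norm (hs.subtype _).norm).trans ?_
  refine Summable.tsum_le_tsum (fun j => ?_) (hs.subtype _).norm
    ((hf.summable_abs_apply z).subtype _)
  rw [Function.comp_apply, Real.norm_eq_abs, abs_mul]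
  exact mul_le_of_le_one_left (abs_nonneg _) (hθ j)

variable {b d : ℝ}

lemma sub_mul_abs_le_mul_tsum (hf : HasUpperC0Estimate f) {z : X} {m : ℕ}
    (hdiag : b ≤ f m z) (hoff : ∑' j : {j : ℕ // j ≠ m}, |f j.1 z| ≤ d) {θ : ℕ → ℝ}
    (hθ : ∀ j, |θ j| ≤ 1) {a : ℝ} (ha : θ m * a = |a|) :
    (b - d) * |a| ≤ a * ∑' j, θ j * f j z := by
  have hrest := (abs_tsum_mul_apply_sub_le hf hθ z m).trans hoff
  have hdiag' : |a| * b ≤ a * (θ m * f m z) := by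
    rw [← mul_assoc, mul_comm a, ha]
    exact mul_le_mul_of_nonneg_left hdiag (abs_nonneg a)
  have hrest' := neg_abs_le (a * (∑' j, θ j * f j z - θ m * f m z))
  rw [abs_mul] at hrest'
  nlinarith [mul_le_mul_of_nonneg_left hrest (abs_nonneg a)]

variable {y : ℕ → X}

lemma sub_mul_sum_abs_le_norm_sum_smul (hf : HasUpperC0Estimate f)
    (hdiag : ∀ m, b ≤ f m (y m)) (hoff : ∀ m, ∑' j : {j : ℕ // j ≠ m}, |f j.1 (y m)| ≤ d)
    (α : ℕ → ℝ) (s : Finset ℕ) :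
    (b - d) * ∑ m ∈ s, |α m| ≤ ‖∑ m ∈ s, α m • y m‖ := by
  set θ : ℕ → ℝ := fun j => SignType.sign (α j)
  have hθ : ∀ j, |θ j| ≤ 1 := fun j => abs_sign_le_one (α j)
  calc (b - d) * ∑ m ∈ s, |α m|
      ≤ ∑ m ∈ s, α m * ∑' j, θ j * f j (y m) := by
        rw [Finset.mul_sum]
        exact Finset.sum_le_sum fun m _ =>
          sub_mul_abs_le_mul_tsum hf (hdiag m) (hoff m) hθ (sign_mul_self (α m))
    _ = ∑' j, θ j * f j (∑ m ∈ s, α m • y m) := by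
        simp_rw [← tsum_mul_left]
        rw [← Summable.tsum_finsetSum fun m _ => (hf.summable_mul_apply hθ (y m)).mul_left (α m)]
        simp_rw [map_sum, map_smul, smul_eq_mul, Finset.mul_sum]
        exact tsum_congr fun j => Finset.sum_congr rfl fun m _ => by ring
    _ ≤ ‖∑ m ∈ s, α m • y m‖ := hf.tsum_mul_apply_le_norm hθ _

lemma sub_mul_tsum_abs_le_norm_tsum_smul [CompleteSpace X] (hf : HasUpperC0Estimate f)
    (hdiag : ∀ m, b ≤ f m (y m)) (hoff : ∀ m, ∑' j : {j : ℕ // j ≠ m}, |f j.1 (y m)| ≤ d)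
    {C : ℝ} (hy : ∀ m, ‖y m‖ ≤ C) {α : ℕ → ℝ} (hα : Summable (fun m => |α m|)) :
    (b - d) * ∑' m, |α m| ≤ ‖∑' m, α m • y m‖ := by
  have hαy : Summable (fun m => α m • y m) :=
    (hα.mul_right C).of_norm_bounded fun m => by
      rw [norm_smul, Real.norm_eq_abs]
      exact mul_le_mul_of_nonneg_left (hy m) (abs_nonneg _)
  exact le_of_tendsto_of_tendsto' (hα.hasSum.tendsto_sum_nat.const_mul (b - d))
    hαy.hasSum.tendsto_sum_nat.norm
    fun N => sub_mul_sum_abs_le_norm_sum_smul hf hdiag hoff α _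

end HasUpperC0Estimate

end UpperC0Estimate

section JamesConstant

variable {X : Type*} [NormedAddCommGroup X] [NormedSpace ℝ X] {x : ℕ → X}

/-- `cm x m` is by definition `sInf (cmSet x m)`. -/
def cmSet (x : ℕ → X) (m : ℕ) : Set ℝ :=
  {r : ℝ | ∃ α : ℕ → ℝ, (∀ n < m, α n = 0) ∧ Summable (fun n => |α n|) ∧
    (∑' n, |α n|) = 1 ∧ r = ‖∑' n, α n • x n‖}

lemma norm_mem_cmSet (x : ℕ → X) (m : ℕ) : ‖x m‖ ∈ cmSet x m := by
  classical
  have habs : (fun n => |(Pi.single m 1 : ℕ → ℝ) n|) = Pi.single m 1 := by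
    ext n; by_cases h : n = m <;> simp [h]
  refine ⟨Pi.single m 1, fun n hn => Pi.single_eq_of_ne hn.ne 1, ?_, ?_, ?_⟩
  · rw [habs]; exact (hasSum_pi_single m 1).summable
  · rw [habs]; exact tsum_pi_single m 1
  · rw [tsum_eq_single m fun n hn => by simp [Pi.single_eq_of_ne hn]]
    simp

lemma bddBelow_cmSet (x : ℕ → X) (m : ℕ) : BddBelow (cmSet x m) :=
  ⟨0, fun _ ⟨_, _, _, _, hr⟩ => hr ▸ norm_nonneg _⟩

lemma cm_le_norm (x : ℕ → X) (m : ℕ) : cm x m ≤ ‖x m‖ :=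
  csInf_le (bddBelow_cmSet x m) (norm_mem_cmSet x m)

lemma le_cm {c : ℝ} {m : ℕ}
    (h : ∀ α : ℕ → ℝ, (∀ n < m, α n = 0) → Summable (fun n => |α n|) →
      (∑' n, |α n|) = 1 → c ≤ ‖∑' n, α n • x n‖) :
    c ≤ cm x m :=
  le_csInf ⟨_, norm_mem_cmSet x m⟩ fun _ ⟨α, hsupp, hα, hα1, hr⟩ => hr ▸ h α hsupp hα hα1

variable {C : ℝ}

lemma cJ_le (hx : ∀ n, ‖x n‖ ≤ C) : cJ x ≤ C :=
  Real.iSup_le (fun m => (cm_le_norm x m).trans (hx m)) ((norm_nonneg _).trans (hx 0))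

lemma cm_le_cJ (hx : ∀ n, ‖x n‖ ≤ C) (m : ℕ) : cm x m ≤ cJ x :=
  le_ciSup ⟨C, Set.forall_mem_range.2 fun k => (cm_le_norm x k).trans (hx k)⟩ m

lemma cJ_comp_le_cJtilde (hx : ∀ n, ‖x n‖ ≤ C) {g : ℕ → ℕ} (hg : StrictMono g) :
    cJ (x ∘ g) ≤ cJtilde x :=
  le_ciSup (f := fun g : {g : ℕ → ℕ // StrictMono g} => cJ (x ∘ g.1))
    ⟨C, Set.forall_mem_range.2 fun g => cJ_le fun n => hx (g.1 n)⟩ ⟨g, hg⟩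

lemma le_cJtilde_of_le_norm_tsum (hx : ∀ n, ‖x n‖ ≤ C) {g : ℕ → ℕ} (hg : StrictMono g)
    {c : ℝ} (h : ∀ α : ℕ → ℝ, Summable (fun m => |α m|) → (∑' m, |α m|) = 1 →
      c ≤ ‖∑' m, α m • x (g m)‖) :
    c ≤ cJtilde x :=
  calc c ≤ cm (x ∘ g) 0 := le_cm fun α _ hα hα1 => h α hα hα1
    _ ≤ cJ (x ∘ g) := cm_le_cJ (fun n => hx (g n)) 0
    _ ≤ cJtilde x := cJ_comp_le_cJtilde hx hg

end JamesConstant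

open NormedSpace in
theorem stmt8 {X : Type*} [NormedAddCommGroup X] [NormedSpace ℝ X] [CompleteSpace X]
    (xstar : ℕ → StrongDual ℝ X)
    (hupper : ∀ (s : Finset ℕ) (α : ℕ → ℝ),
      ‖∑ n ∈ s, α n • xstar n‖ ≤ ⨆ n ∈ s, |α n|)
    (x : ℕ → X) (hbdd : ∃ C, ∀ n, ‖x n‖ ≤ C)
    (κ : ℝ) (hκ : 0 < κ) (n p : ℕ → ℕ) (hn : StrictMono n) (hp : StrictMono p)
    (h1 : ∀ m, κ + cJtilde x < xstar (n m) (x (p (n m))))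
    (h2 : ∀ m, (∑' j : {j : ℕ // j ≠ m}, |xstar (n j.1) (x (p (n m)))|) < κ / 2) :
    (∀ α : ℕ → ℝ, Summable (fun m => |α m|) →
      (κ / 2 + cJtilde x) * ∑' m, |α m| ≤ ‖∑' m, α m • x (p (n m))‖) ∧ False := by
  obtain ⟨C, hC⟩ := hbdd
  have hf := hasUpperC0Estimate_comp hupper hn.injective
  have hlower : ∀ α : ℕ → ℝ, Summable (fun m => |α m|) →
      (κ / 2 + cJtilde x) * ∑' m, |α m| ≤ ‖∑' m, α m • x (p (n m))‖ := fun α hα => by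
    have := hf.sub_mul_tsum_abs_le_norm_tsum_smul (fun m => (h1 m).le) (fun m => (h2 m).le)
      (fun m => hC (p (n m))) hα
    rwa [show κ + cJtilde x - κ / 2 = κ / 2 + cJtilde x by ring] at this
  refine ⟨hlower, ?_⟩
  have hle := le_cJtilde_of_le_norm_tsum hC (hp.comp hn) fun α hα hα1 => by
    simpa [hα1] using hlower α hα
  linarith
end
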